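/- Let V be a self-orthogonal d-dimensional F_q-subspace of F_q^{2n}, and let c : V → ℂ with c(0) = 1 be such that W(v) := c(v)·W̃(v) satisfies W(v) W(v') = W(v + v') for all v, v' ∈ V. Then there exists a unique family of q^n × q^n complex matrices (P_{[w]}), indexed by the cosets [w] = w + V^{⊥J} of the quotient F_q^{2n}/V^{⊥J}, such that: each P_{[w]} is an orthogonal projection (Hermitian and idempotent); P_{[w]} P_{[w']} = 0 whenever [w] ≠ [w']; ∑_{[w] ∈ F_q^{2n}/V^{⊥J}} P_{[w]} = I; and for every v ∈ V, W(v) = ∑_{[w] ∈ F_q^{2n}/V^{⊥J}} ω^{⟨v, Jw⟩} P_{[w]} (the exponent ⟨v, Jw⟩ depends only on the coset [w]). -/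

import Mathlib

/-- `ω = exp(2πi/p)`, a primitive `p`-th root of unity. -/
noncomputable def omg (p : ℕ) : ℂ := Complex.exp (2 * (Real.pi : ℂ) * Complex.I / (p : ℂ))

/-- The `F_p`-valued pairing `⟨x, y⟩ = tr(∑ s, x s * y s)` on `F_q^n`, where
`tr : F_q → F_p` is the field trace. -/
noncomputable def ip (p : ℕ) {K : Type*} [Field K] [Fintype K] [Algebra (ZMod p) K]
    {n : ℕ} (x y : Fin n → K) : ZMod p :=
  Algebra.trace (ZMod p) K (∑ s, x s * y s)

/-- The Weyl operator `W̃(a,b)`: the `q^n × q^n` complex matrix, with rows and columns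
indexed by `F_q^n`, whose `(j,k)` entry is `ω^{⟨b,k⟩}` if `j = k + a` and `0`
otherwise. -/
noncomputable def Wt (p : ℕ) {K : Type*} [Field K] [Fintype K] [DecidableEq K]
    [Algebra (ZMod p) K] {n : ℕ} (a b : Fin n → K) :
    Matrix (Fin n → K) (Fin n → K) ℂ :=
  Matrix.of fun j k => if j = k + a then omg p ^ (ip p b k).val else 0

/-- The Weyl operator `W̃(v)` of a vector `v = (a,b) ∈ F_q^{2n} = F_q^n × F_q^n`. -/
noncomputable def Wtv (p : ℕ) {K : Type*} [Field K] [Fintype K] [DecidableEq K]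
    [Algebra (ZMod p) K] {n : ℕ} (v : (Fin n → K) × (Fin n → K)) :
    Matrix (Fin n → K) (Fin n → K) ℂ :=
  Wt p v.1 v.2

/-- The symplectic pairing `⟨v, Jw⟩ = ⟨v.2, w.1⟩ − ⟨v.1, w.2⟩ ∈ F_p` on
`F_q^{2n} = F_q^n × F_q^n`, where `J = [[0, −I_n],[I_n, 0]]`. -/
noncomputable def symp (p : ℕ) {K : Type*} [Field K] [Fintype K] [Algebra (ZMod p) K]
    {n : ℕ} (v w : (Fin n → K) × (Fin n → K)) : ZMod p :=
  ip p v.2 w.1 - ip p v.1 w.2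

lemma ip_add_right (p : ℕ) {K : Type*} [Field K] [Fintype K] [Algebra (ZMod p) K]
    {n : ℕ} (x y y' : Fin n → K) : ip p x (y + y') = ip p x y + ip p x y' := by
  unfold ip
  rw [← map_add]
  congr 1
  simp [mul_add, Finset.sum_add_distrib]

lemma ip_neg_right (p : ℕ) {K : Type*} [Field K] [Fintype K] [Algebra (ZMod p) K]
    {n : ℕ} (x y : Fin n → K) : ip p x (-y) = - ip p x y := by
  unfold ip
  rw [← map_neg]
  congr 1
  simp [mul_neg]

lemma ip_zero_right (p : ℕ) {K : Type*} [Field K] [Fintype K] [Algebra (ZMod p) K]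
    {n : ℕ} (x : Fin n → K) : ip p x 0 = 0 := by
  simp [ip]

/-- `V^{⊥J} = {w ∈ F_q^{2n} : ⟨v, Jw⟩ = 0 for all v ∈ V}`, as an additive subgroup of
`F_q^{2n}` (so that one can form the quotient `F_q^{2n} / V^{⊥J}`). -/
def sympPerp (p : ℕ) {K : Type*} [Field K] [Fintype K] [Algebra (ZMod p) K]
    {n : ℕ} (V : Submodule K ((Fin n → K) × (Fin n → K))) :
    AddSubgroup ((Fin n → K) × (Fin n → K)) where
  carrier := {w | ∀ v ∈ V, symp p v w = 0}
  zero_mem' := by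
    intro v _
    simp [symp, ip_zero_right]
  add_mem' := by
    intro w w' hw hw' v hv
    have h : symp p v (w + w') = symp p v w + symp p v w' := by
      simp only [symp, Prod.fst_add, Prod.snd_add, ip_add_right]
      ring
    rw [h, hw v hv, hw' v hv, add_zero]
  neg_mem' := by
    intro w hw v hv
    have h : symp p v (-w) = - symp p v w := by
      simp only [symp, Prod.fst_neg, Prod.snd_neg, ip_neg_right]
      ring
    rw [h, hw v hv, neg_zero]

/-! The map `v ↦ W(v) = c(v) W̃(v)` is a representation of the finite abelian group `V`, and it is
unitary: each `W̃(v)` is unitary and `W(v)^|V| = 1` forces `|c(v)| = 1`. Hence it splits into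
isotypic components `P_ψ = |V|⁻¹ ∑_v ψ(-v) W(v)`, one for each character `ψ` of `V`; the
orthogonality relations for characters give the required identities, and uniqueness is Fourier
inversion on `V`. The cosets of `V^{⊥J}` correspond bijectively to the characters of `V` via
`[w] ↦ (v ↦ ω^{⟨v, Jw⟩})`: injectivity is the definition of `V^{⊥J}`, and the two sets have the
same size because, by nondegeneracy of the symplectic form, `v ↦ ω^{⟨v, J·⟩}` also embeds `V`
into the characters of `F_q^{2n}/V^{⊥J}`. -/

open Finset Matrix

lemma Matrix.smul_mem_unitaryGroup_of_pow_eq_one {m : Type*} [Fintype m] [DecidableEq m]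
    [Nonempty m] {c : ℂ} {U : Matrix m m ℂ} (hU : U ∈ unitaryGroup m ℂ) {k : ℕ} (hk : k ≠ 0)
    (h : (c • U) ^ k = 1) : c • U ∈ unitaryGroup m ℂ := by
  have hUk : star (U ^ k) * U ^ k = 1 := (mem_unitaryGroup_iff' ..).1 (pow_mem hU k)
  have hck : ((star c * c) ^ k) • (1 : Matrix m m ℂ) = 1 := by
    have := congrArg (fun A => star A * A) h
    simp only [smul_pow, star_smul, smul_mul_smul_comm, hUk, star_one, mul_one] at this
    rwa [mul_pow, ← star_pow]
  have hnorm : Complex.normSq c = 1 := by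
    have hsc : (star c * c) ^ k = 1 := by
      simpa using congrFun (congrFun hck (Classical.arbitrary m)) (Classical.arbitrary m)
    rw [Complex.star_def, ← Complex.normSq_eq_conj_mul_self] at hsc
    exact (pow_eq_one_iff_of_nonneg (Complex.normSq_nonneg c) hk).1 (by exact_mod_cast hsc)
  rw [mem_unitaryGroup_iff', star_smul, smul_mul_smul_comm, (mem_unitaryGroup_iff' ..).1 hU,
    Complex.star_def, ← Complex.normSq_eq_conj_mul_self, hnorm, Complex.ofReal_one, one_smul]

namespace AddChar

lemma natCard_eq (α : Type*) [AddCommGroup α] [Finite α] :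
    Nat.card (AddChar α ℂ) = Nat.card α := by
  have := Fintype.ofFinite α
  simp only [Nat.card_eq_fintype_card, AddChar.card_eq]

variable {V m : Type*} [AddCommGroup V] [Fintype V] [Fintype m] [DecidableEq m]

lemma sum_apply_neg_mul_apply (ψ φ : AddChar V ℂ) :
    ∑ u, ψ (-u) * φ u = if ψ = φ then (Fintype.card V : ℂ) else 0 := by
  simpa [sub_apply, mul_comm, sub_eq_zero, eq_comm] using sum_eq_ite (φ - ψ)

variable (W : AddChar V (Matrix m m ℂ))

noncomputable def isotypicProj (ψ : AddChar V ℂ) : Matrix m m ℂ :=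
  (Fintype.card V : ℂ)⁻¹ • ∑ v, ψ (-v) • W v

lemma isotypicProj_mul_isotypicProj (ψ φ : AddChar V ℂ) :
    isotypicProj W ψ * isotypicProj W φ = if ψ = φ then isotypicProj W ψ else 0 := by
  have key : (∑ u, ψ (-u) • W u) * (∑ v, φ (-v) • W v)
      = (∑ u, ψ (-u) * φ u) • ∑ w, φ (-w) • W w := by
    calc (∑ u, ψ (-u) • W u) * (∑ v, φ (-v) • W v)
        = ∑ u, ∑ v, (ψ (-u) * φ (-v)) • W (u + v) := by
          simp_rw [sum_mul, mul_sum, smul_mul_smul_comm, map_add_eq_mul]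
      _ = ∑ u, ∑ w, (ψ (-u) * φ u * φ (-w)) • W w := by
          refine sum_congr rfl fun u _ => Fintype.sum_equiv (Equiv.addLeft u) _ _ fun v => ?_
          rw [Equiv.coe_addLeft, mul_assoc, ← map_add_eq_mul φ u, neg_add, add_neg_cancel_left]
      _ = _ := by
          rw [sum_smul_sum]
          simp_rw [smul_smul]
  unfold isotypicProj
  rw [smul_mul_smul_comm, key, sum_apply_neg_mul_apply]
  split_ifs with h
  · subst h
    rw [smul_smul, mul_assoc, inv_mul_cancel₀ (by simp), mul_one]
  · rw [zero_smul, smul_zero]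

lemma sum_isotypicProj : ∑ ψ, isotypicProj W ψ = 1 := by
  classical
  unfold isotypicProj
  rw [← smul_sum, sum_comm]
  simp_rw [← sum_smul, sum_apply_eq_ite, neg_eq_zero, ite_smul, zero_smul, sum_ite_eq',
    mem_univ, if_true, map_zero_eq_one]
  rw [smul_smul, inv_mul_cancel₀ (by simp), one_smul]

lemma sum_smul_isotypicProj (v : V) : ∑ ψ, ψ v • isotypicProj W ψ = W v := by
  classical
  have key : ∑ ψ : AddChar V ℂ, ψ v • ∑ u, ψ (-u) • W u = (Fintype.card V : ℂ) • W v := by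
    simp_rw [smul_sum, smul_smul, ← map_add_eq_mul]
    rw [sum_comm]
    simp_rw [← sum_smul, ← sub_eq_add_neg, sum_apply_eq_ite, sub_eq_zero, ite_smul, zero_smul,
      sum_ite_eq, mem_univ, if_true]
  unfold isotypicProj
  simp_rw [smul_comm _ ((Fintype.card V : ℂ)⁻¹)]
  rw [← smul_sum, key, smul_smul, inv_mul_cancel₀ (by simp), one_smul]

lemma isotypicProj_eq_of_sum_smul {F : AddChar V ℂ → Matrix m m ℂ}
    (hF : ∀ v, W v = ∑ ψ, ψ v • F ψ) (ψ : AddChar V ℂ) : isotypicProj W ψ = F ψ := by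
  have key : ∑ v, ψ (-v) • W v = (Fintype.card V : ℂ) • F ψ := by
    simp_rw [hF, smul_sum, smul_smul]
    rw [sum_comm]
    simp_rw [← sum_smul, sum_apply_neg_mul_apply, ite_smul, zero_smul, sum_ite_eq, mem_univ,
      if_true]
  rw [isotypicProj, key, smul_smul, inv_mul_cancel₀ (by simp), one_smul]

omit [Fintype V] in
lemma star_apply_eq_apply_neg (hW : ∀ v, W v ∈ unitaryGroup m ℂ) (v : V) :
    star (W v) = W (-v) := by
  calc star (W v) = star (W v) * (W v * W (-v)) := by
        rw [← map_add_eq_mul, add_neg_cancel, map_zero_eq_one, mul_one]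
    _ = W (-v) := by rw [← mul_assoc, (mem_unitaryGroup_iff' ..).1 (hW v), one_mul]

lemma conjTranspose_isotypicProj (hW : ∀ v, W v ∈ unitaryGroup m ℂ) (ψ : AddChar V ℂ) :
    (isotypicProj W ψ)ᴴ = isotypicProj W ψ := by
  unfold isotypicProj
  simp_rw [conjTranspose_smul, conjTranspose_sum, conjTranspose_smul, star_inv₀, star_natCast,
    ← star_eq_conjTranspose, star_apply_eq_apply_neg W hW, Complex.star_def,
    ← map_neg_eq_conj, neg_neg]
  congr 1
  exact Fintype.sum_equiv (Equiv.neg V) _ _ fun v => by simp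

theorem existsUnique_isotypic_decomposition {X : Type*} [Fintype X] (e : X ≃ AddChar V ℂ)
    (hW : ∀ v, W v ∈ unitaryGroup m ℂ) :
    ∃! P : X → Matrix m m ℂ,
      (∀ x, (P x)ᴴ = P x ∧ P x * P x = P x) ∧
      (∀ x y, x ≠ y → P x * P y = 0) ∧
      ∑ x, P x = 1 ∧
      ∀ v, W v = ∑ x, e x v • P x := by
  refine ⟨fun x => isotypicProj W (e x), ⟨fun x => ⟨conjTranspose_isotypicProj W hW _, ?_⟩,
    fun x y hxy => ?_, ?_, fun v => ?_⟩, fun F hF => funext fun x => ?_⟩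
  · rw [isotypicProj_mul_isotypicProj, if_pos rfl]
  · rw [isotypicProj_mul_isotypicProj, if_neg (e.injective.ne hxy)]
  · rw [e.sum_comp (isotypicProj W), sum_isotypicProj]
  · rw [e.sum_comp (fun ψ => ψ v • isotypicProj W ψ), sum_smul_isotypicProj]
  · have hF' : ∀ v, W v = ∑ ψ, ψ v • F (e.symm ψ) := fun v => by
      rw [hF.2.2.2 v, ← e.symm.sum_comp]
      simp_rw [Equiv.apply_symm_apply]
    rw [isotypicProj_eq_of_sum_smul W hF', Equiv.symm_apply_apply]

end AddChar

lemma omg_pow_val (p : ℕ) [NeZero p] (k : ZMod p) : omg p ^ k.val = ZMod.stdAddChar k := by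
  rw [ZMod.stdAddChar_apply, ZMod.toCircle_apply, omg, ← Complex.exp_nat_mul]
  ring_nf

section Symplectic

variable (p : ℕ) {K : Type*} [Field K] [Fintype K] [Algebra (ZMod p) K] {n : ℕ}

lemma ip_add_left (x x' y : Fin n → K) : ip p (x + x') y = ip p x y + ip p x' y := by
  simp only [ip, Pi.add_apply, add_mul, sum_add_distrib, map_add]

lemma symp_add_left (v v' w : (Fin n → K) × (Fin n → K)) :
    symp p (v + v') w = symp p v w + symp p v' w := by
  simp only [symp, Prod.fst_add, Prod.snd_add, ip_add_left]
  ring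

lemma symp_add_right (v w w' : (Fin n → K) × (Fin n → K)) :
    symp p v (w + w') = symp p v w + symp p v w' := by
  simp only [symp, Prod.fst_add, Prod.snd_add, ip_add_right]
  ring

lemma symp_sub_left (v v' w : (Fin n → K) × (Fin n → K)) :
    symp p (v - v') w = symp p v w - symp p v' w := by
  rw [eq_sub_iff_add_eq, ← symp_add_left, sub_add_cancel]

lemma symp_sub_right (v w w' : (Fin n → K) × (Fin n → K)) :
    symp p v (w - w') = symp p v w - symp p v w' := by
  rw [eq_sub_iff_add_eq, ← symp_add_right, sub_add_cancel]

variable [Fact p.Prime]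

lemma exists_ip_ne_zero {x : Fin n → K} (hx : x ≠ 0) : ∃ y, ip p x y ≠ 0 := by
  classical
  obtain ⟨a, ha⟩ := DFunLike.ne_iff.1 (Algebra.trace_ne_zero (ZMod p) K)
  obtain ⟨s, hs⟩ := Function.ne_iff.1 hx
  refine ⟨Pi.single s (a / x s), ?_⟩
  have hdot : ∑ t, x t * (Pi.single s (a / x s) : Fin n → K) t = a := by
    rw [← dotProduct, dotProduct_single, mul_div_cancel₀ _ hs]
  simpa [ip, hdot] using ha

lemma exists_symp_ne_zero {v : (Fin n → K) × (Fin n → K)} (hv : v ≠ 0) :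
    ∃ w, symp p v w ≠ 0 := by
  by_cases h₁ : v.1 = 0
  · obtain ⟨y, hy⟩ := exists_ip_ne_zero p (x := v.2) fun h₂ => hv (Prod.ext h₁ h₂)
    exact ⟨(y, 0), by simpa [symp, ip] using hy⟩
  · obtain ⟨y, hy⟩ := exists_ip_ne_zero p h₁
    exact ⟨(0, y), by simpa [symp, ip] using hy⟩

end Symplectic

section Duality

variable (p : ℕ) [Fact p.Prime] {K : Type*} [Field K] [Fintype K] [Algebra (ZMod p) K] {n : ℕ}
  (V : Submodule K ((Fin n → K) × (Fin n → K)))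

lemma mem_sympPerp {w : (Fin n → K) × (Fin n → K)} :
    w ∈ sympPerp p V ↔ ∀ v ∈ V, symp p v w = 0 :=
  Iff.rfl

noncomputable def sympChar (w : (Fin n → K) × (Fin n → K)) : AddChar V ℂ where
  toFun v := ZMod.stdAddChar (symp p v w)
  map_zero_eq_one' := by simp [symp, ip]
  map_add_eq_mul' u v := by rw [Submodule.coe_add, symp_add_left, AddChar.map_add_eq_mul]

lemma injective_sympChar_out :
    Function.Injective
      fun x : ((Fin n → K) × (Fin n → K)) ⧸ sympPerp p V => sympChar p V x.out := by
  intro x y hxy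
  rw [← QuotientAddGroup.out_eq' x, ← QuotientAddGroup.out_eq' y, QuotientAddGroup.eq,
    mem_sympPerp]
  intro v hv
  have hv' : symp p v x.out = symp p v y.out :=
    ZMod.injective_stdAddChar (DFunLike.congr_fun hxy (⟨v, hv⟩ : V))
  rw [neg_add_eq_sub, symp_sub_right, hv', sub_self]

noncomputable def quotientSympChar (v : V) :
    AddChar (((Fin n → K) × (Fin n → K)) ⧸ sympPerp p V) ℂ :=
  ZMod.stdAddChar.compAddMonoidHom <|
    QuotientAddGroup.lift (sympPerp p V) (AddMonoidHom.mk' (symp p v.1) (symp_add_right p v.1))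
      fun _ hw => (AddMonoidHom.mem_ker).2 ((mem_sympPerp p V).1 hw v v.2)

lemma injective_quotientSympChar : Function.Injective (quotientSympChar p V) := by
  intro u v huv
  by_contra hne
  obtain ⟨w, hw⟩ := exists_symp_ne_zero p (sub_ne_zero.2 (Subtype.coe_injective.ne hne))
  have huv' : symp p u.1 w = symp p v.1 w :=
    ZMod.injective_stdAddChar (DFunLike.congr_fun huv (QuotientAddGroup.mk w))
  exact hw (by rw [symp_sub_left, huv', sub_self])

lemma card_quotient_sympPerp :
    Nat.card (((Fin n → K) × (Fin n → K)) ⧸ sympPerp p V) = Nat.card V :=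
  le_antisymm
    ((Nat.card_le_card_of_injective _ (injective_sympChar_out p V)).trans_eq
      (AddChar.natCard_eq V))
    ((Nat.card_le_card_of_injective _ (injective_quotientSympChar p V)).trans_eq
      (AddChar.natCard_eq _))

noncomputable def quotientSympPerpEquiv :
    ((Fin n → K) × (Fin n → K)) ⧸ sympPerp p V ≃ AddChar V ℂ :=
  Equiv.ofBijective _ <| (injective_sympChar_out p V).bijective_of_nat_card_le <| by
    rw [AddChar.natCard_eq, card_quotient_sympPerp]

lemma quotientSympPerpEquiv_apply (x : ((Fin n → K) × (Fin n → K)) ⧸ sympPerp p V) (v : V) :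
    quotientSympPerpEquiv p V x v = omg p ^ (symp p v x.out).val :=
  (omg_pow_val p _).symm

end Duality

section Weyl

variable (p : ℕ) [Fact p.Prime] {K : Type*} [Field K] [Fintype K] [DecidableEq K]
  [Algebra (ZMod p) K] {n : ℕ}

lemma Wt_zero : Wt p (0 : Fin n → K) 0 = 1 := by
  ext j k
  simp [Wt, one_apply, ip]

lemma Wt_mem_unitaryGroup (a b : Fin n → K) : Wt p a b ∈ unitaryGroup (Fin n → K) ℂ := by
  rw [mem_unitaryGroup_iff']
  ext j k
  rw [star_eq_conjTranspose, mul_apply, sum_eq_single (j + a)]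
  · simp only [conjTranspose_apply, Wt, of_apply, if_true, add_left_inj, one_apply]
    split_ifs with h
    · rw [h, omg_pow_val, Complex.star_def, ← AddChar.map_neg_eq_conj, ← AddChar.map_add_eq_mul,
        neg_add_cancel, AddChar.map_zero_eq_one]
    · rw [mul_zero]
  · intro i _ hi
    simp [Wt, hi]
  · simp

end Weyl

theorem stmt_12_general (p : ℕ) [Fact p.Prime] (K : Type*) [Field K] [Fintype K] [DecidableEq K]
    [Algebra (ZMod p) K] (n : ℕ)
    (V : Submodule K ((Fin n → K) × (Fin n → K)))
    (c : ((Fin n → K) × (Fin n → K)) → ℂ) (hc0 : c 0 = 1)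
    (hmul : ∀ v ∈ V, ∀ v' ∈ V,
      (c v • Wtv p v) * (c v' • Wtv p v') = c (v + v') • Wtv p (v + v')) :
    ∃! P : (((Fin n → K) × (Fin n → K)) ⧸ sympPerp p V) →
        Matrix (Fin n → K) (Fin n → K) ℂ,
      (∀ x, (P x).conjTranspose = P x ∧ P x * P x = P x) ∧
      (∀ x y, x ≠ y → P x * P y = 0) ∧
      (∑ᶠ x, P x) = 1 ∧
      (∀ v ∈ V, c v • Wtv p v = ∑ᶠ x, omg p ^ (symp p v x.out).val • P x) := by
  classical
  let W : AddChar V (Matrix (Fin n → K) (Fin n → K) ℂ) :=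
    { toFun := fun v => c v.1 • Wtv p v.1
      map_zero_eq_one' := by rw [Submodule.coe_zero, hc0, one_smul]; exact Wt_zero p
      map_add_eq_mul' := fun u v => (hmul u.1 u.2 v.1 v.2).symm }
  have hW (v : V) : W v ∈ unitaryGroup (Fin n → K) ℂ :=
    smul_mem_unitaryGroup_of_pow_eq_one (Wt_mem_unitaryGroup p v.1.1 v.1.2)
      (Fintype.card_ne_zero (α := V)) <| by
      change W v ^ _ = 1
      rw [← AddChar.map_nsmul_eq_pow, card_nsmul_eq_zero, AddChar.map_zero_eq_one]
  refine (existsUnique_congr fun P => ?_).1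
    (AddChar.existsUnique_isotypic_decomposition W (quotientSympPerpEquiv p V) hW)
  simp only [finsum_eq_sum_of_fintype, quotientSympPerpEquiv_apply, Subtype.forall]
  rfl

/-- Proposition 2, part 1, of the paper: let `V` be a self-orthogonal
`d`-dimensional subspace of `F_q^{2n}` and `c : V → ℂ` with `c 0 = 1` be such that
`W(v) := c v • W̃(v)` satisfies `W(v)W(v') = W(v+v')` on `V`.  Then there is a unique
family `(P_{[w]})` of matrices indexed by the cosets `[w] ∈ F_q^{2n}/V^{⊥J}` such that
each `P_{[w]}` is an orthogonal projection, `P_{[w]} P_{[w']} = 0` for `[w] ≠ [w']`,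
`∑_{[w]} P_{[w]} = I`, and `W(v) = ∑_{[w]} ω^{⟨v, Jw⟩} P_{[w]}` for every `v ∈ V`
(the exponent is evaluated on the representative `x.out` of a coset `x`; for `v ∈ V`
it depends only on the coset). -/
theorem stmt_12 (p : ℕ) [Fact p.Prime] (K : Type*) [Field K] [Fintype K] [DecidableEq K]
    [Algebra (ZMod p) K] (n d : ℕ)
    (V : Submodule K ((Fin n → K) × (Fin n → K)))
    (hd : Module.finrank K V = d)
    (hV : ∀ v ∈ V, ∀ v' ∈ V, symp p v v' = 0)
    (c : ((Fin n → K) × (Fin n → K)) → ℂ) (hc0 : c 0 = 1)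
    (hmul : ∀ v ∈ V, ∀ v' ∈ V,
      (c v • Wtv p v) * (c v' • Wtv p v') = c (v + v') • Wtv p (v + v')) :
    ∃! P : (((Fin n → K) × (Fin n → K)) ⧸ sympPerp p V) →
        Matrix (Fin n → K) (Fin n → K) ℂ,
      (∀ x, (P x).conjTranspose = P x ∧ P x * P x = P x) ∧
      (∀ x y, x ≠ y → P x * P y = 0) ∧
      (∑ᶠ x, P x) = 1 ∧
      (∀ v ∈ V, c v • Wtv p v = ∑ᶠ x, omg p ^ (symp p v x.out).val • P x) :=
  stmt_12_general p K n V c hc0 hmul
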